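/- (Theorem 3.4: correctness of the GPK algorithm when 0 is in the image.) Let n ≥ 1 and let f : 𝔽₂ⁿ → 𝔽₂ᵐ satisfy the promise that either (i) f(x) = 0 for all x ∈ 𝔽₂ⁿ, or (ii) there is some c ∈ 𝔽₂ᵐ with c ≠ 0 such that f takes only the values 0 and c, each on exactly 2^(n−1) inputs. Then f is constantly 0 if and only if for every i ∈ Fin m the sum Σ_{x ∈ 𝔽₂ⁿ} (−1)^(f(x)·e_i) is nonzero; moreover in case (i) each such sum equals 2ⁿ, and in case (ii) there exists i ∈ Fin m for which the sum equals 0. -/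
import Mathlib


/-- The sign `(−1)^a ∈ ℂ` associated to a bit `a ∈ 𝔽₂`. -/
noncomputable def sgn (a : ZMod 2) : ℂ := (-1 : ℂ) ^ a.val

/-- The pairing `x·z = Σᵢ xᵢ·zᵢ ∈ 𝔽₂` of two binary strings. -/
def dotp {k : ℕ} (x z : Fin k → ZMod 2) : ZMod 2 := ∑ i, x i * z i

/-- The `i`-th standard basis vector of `𝔽₂ᵏ`. -/
def stdBasis {k : ℕ} (i : Fin k) : Fin k → ZMod 2 :=
  fun j => if j = i then 1 else 0

/-- `f` is balanced between the value `0` and a fixed nonzero value `c`: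
each is attained on exactly `2^(n−1)` inputs. -/
def BalancedWithZero {n m : ℕ} (f : (Fin n → ZMod 2) → (Fin m → ZMod 2)) : Prop :=
  ∃ c : Fin m → ZMod 2, c ≠ 0 ∧ (∀ x, f x = 0 ∨ f x = c) ∧
    (Finset.univ.filter (fun x : Fin n → ZMod 2 => f x = 0)).card = 2 ^ (n - 1) ∧
    (Finset.univ.filter (fun x : Fin n → ZMod 2 => f x = c)).card = 2 ^ (n - 1)

lemma sgn_zero : sgn 0 = 1 := by
  simp [sgn, ZMod.val_zero]

lemma sgn_one : sgn 1 = -1 := by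
  simp [sgn, ZMod.val_one]

lemma dotp_stdBasis {k : ℕ} (v : Fin k → ZMod 2) (i : Fin k) :
    dotp v (stdBasis i) = v i := by
  unfold dotp stdBasis
  simp [Finset.sum_ite_eq']

lemma balanced_sum {n m : ℕ} (hn : 1 ≤ n)
    (f : (Fin n → ZMod 2) → (Fin m → ZMod 2))
    (hb : BalancedWithZero f) :
    ∃ i : Fin m, (∑ x : Fin n → ZMod 2, sgn (dotp (f x) (stdBasis i))) = 0 := by
  obtain ⟨c, hc0, hvals, h0, hc⟩ := hb
  obtain ⟨i, hi⟩ : ∃ i, c i ≠ 0 := by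
    by_contra h
    push_neg at h
    exact hc0 (funext fun j => h j)
  have hci : c i = 1 := by
    have h2 : ∀ a : ZMod 2, a ≠ 0 → a = 1 := by decide
    exact h2 _ hi
  refine ⟨i, ?_⟩
  have hsplit := Finset.sum_filter_add_sum_filter_not Finset.univ
    (fun x : Fin n → ZMod 2 => f x = 0)
    (fun x => sgn (dotp (f x) (stdBasis i)))
  have hfil : Finset.univ.filter (fun x : Fin n → ZMod 2 => ¬ f x = 0)
      = Finset.univ.filter (fun x : Fin n → ZMod 2 => f x = c) := by
    ext x
    simp only [Finset.mem_filter, Finset.mem_univ, true_and]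
    constructor
    · intro hx; rcases hvals x with h | h
      · exact absurd h hx
      · exact h
    · intro hx h0'; exact hc0 (by rw [← hx, h0'])
  have h1 : ∑ x ∈ Finset.univ.filter (fun x : Fin n → ZMod 2 => f x = 0),
      sgn (dotp (f x) (stdBasis i)) = (2:ℂ) ^ (n-1) := by
    have he : ∀ x ∈ Finset.univ.filter (fun x : Fin n → ZMod 2 => f x = 0),
        sgn (dotp (f x) (stdBasis i)) = 1 := fun x hx => by
      simp only [Finset.mem_filter] at hx
      rw [dotp_stdBasis, hx.2]; exact sgn_zero
    rw [Finset.sum_congr rfl he, Finset.sum_const, h0]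
    simp
  have h2 : ∑ x ∈ Finset.univ.filter (fun x : Fin n → ZMod 2 => ¬ f x = 0),
      sgn (dotp (f x) (stdBasis i)) = -(2:ℂ) ^ (n-1) := by
    rw [hfil]
    have he : ∀ x ∈ Finset.univ.filter (fun x : Fin n → ZMod 2 => f x = c),
        sgn (dotp (f x) (stdBasis i)) = -1 := fun x hx => by
      simp only [Finset.mem_filter] at hx
      rw [dotp_stdBasis, hx.2, hci]; exact sgn_one
    rw [Finset.sum_congr rfl he, Finset.sum_const, hc]
    simp
  rw [← hsplit, h1, h2]
  ring

/-- Theorem 3.4: correctness of the GPK algorithm when `0` is in the image.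
Under the promise, `f` is constantly `0` iff for every marker `e_i` the sum
`Σ_x (−1)^(f(x)·e_i)` is nonzero; in the constant case every sum equals `2ⁿ`,
and in the balanced case some sum equals `0`. -/
theorem gpk_deutsch_jozsa_zero_case {n m : ℕ} (hn : 1 ≤ n)
    (f : (Fin n → ZMod 2) → (Fin m → ZMod 2))
    (hprom : (∀ x, f x = 0) ∨ BalancedWithZero f) :
    ((∀ x, f x = 0) ↔
      ∀ i : Fin m,
        (∑ x : Fin n → ZMod 2, sgn (dotp (f x) (stdBasis i))) ≠ 0) ∧
    ((∀ x, f x = 0) →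
      ∀ i : Fin m,
        (∑ x : Fin n → ZMod 2, sgn (dotp (f x) (stdBasis i))) = 2 ^ n) ∧
    (BalancedWithZero f →
      ∃ i : Fin m,
        (∑ x : Fin n → ZMod 2, sgn (dotp (f x) (stdBasis i))) = 0) := by
  have hconst : (∀ x, f x = 0) →
      ∀ i : Fin m,
        (∑ x : Fin n → ZMod 2, sgn (dotp (f x) (stdBasis i))) = 2 ^ n := by
    intro h i
    have : ∀ x : Fin n → ZMod 2, sgn (dotp (f x) (stdBasis i)) = 1 := by
      intro x
      rw [dotp_stdBasis, h x]
      exact sgn_zero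
    rw [Finset.sum_congr rfl (fun x _ => this x), Finset.sum_const]
    simp [Finset.card_univ]
  refine ⟨⟨fun h i => ?_, fun h => ?_⟩, hconst, balanced_sum hn f⟩
  · rw [hconst h i]
    exact pow_ne_zero n two_ne_zero
  · rcases hprom with h' | h'
    · exact h'
    · obtain ⟨i, hi⟩ := balanced_sum hn f h'
      exact absurd hi (h i)
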